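/- arXiv:1903.11761 — 12 statements merged into one kernel-verified Lean document; each statement's English description precedes it below -/
import Mathlib

section
/- Reversibility Lemma: For all states x, y, z ∈ Ω, one has F(x, y) = (z, x) if and only if F(x, z) = (y, x). -/
/-- A site of the `L × L` toroidal lattice. -/
abbrev Site (L : ℕ) := ZMod L × ZMod L

/-- The set `Ω` of states: functions on the lattice with values in `{-1, 1}`. -/
def Omega (L : ℕ) := {x : Site L → ℤ // ∀ k, x k = 1 ∨ x k = -1}

namespace Q2R

variable {L : ℕ}

/-- The sum of the four von Neumann neighbors of site `k`. -/
def nbhdSum (x : Site L → ℤ) (k : Site L) : ℤ :=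
  x (k + (1, 0)) + x (k - (1, 0)) + x (k + (0, 1)) + x (k - (0, 1))

/-- The map `φ : Ω → Ω`, detecting null neighborhoods. -/
def phi (x : Omega L) : Omega L :=
  ⟨fun k => if nbhdSum x.1 k = 0 then -1 else 1, fun k => by
    by_cases h : nbhdSum x.1 k = 0 <;> simp [h]⟩

/-- Hadamard (pointwise) product `x ⊙ y`. -/
def had (x y : Omega L) : Omega L :=
  ⟨fun k => x.1 k * y.1 k, fun k => by
    rcases x.2 k with h | h <;> rcases y.2 k with h' | h' <;> simp [h, h']⟩

/-- The constant state `𝟙`. -/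
def one : Omega L := ⟨fun _ => 1, fun _ => Or.inl rfl⟩

/-- Negation: `-x = (-𝟙) ⊙ x`. -/
def neg (x : Omega L) : Omega L := had ⟨fun _ => -1, fun _ => Or.inr rfl⟩ x

/-- The Q2R map `F(x, y) = (y ⊙ φ(x), x)`. -/
def F : Omega L × Omega L → Omega L × Omega L := fun p => (had p.2 (phi p.1), p.1)

/-- The configuration `p` has minimal period `T ≥ 1` under `F`. -/
def IsMinPeriod (p : Omega L × Omega L) (T : ℕ) : Prop :=
  F^[T] p = p ∧ ∀ t, 0 < t → t < T → F^[t] p ≠ p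

/-- The orbit of a configuration under `F`. -/
def orbit (p : Omega L × Omega L) : Set (Omega L × Omega L) :=
  {q | ∃ t : ℕ, F^[t] p = q}

end Q2R

open Q2R

/-- Reversibility Lemma: `F(x, y) = (z, x)` iff `F(x, z) = (y, x)`. -/
theorem q2r_reversibility (L : ℕ) (hL : 2 ≤ L) (hE : Even L) (x y z : Omega L) :
    F (x, y) = (z, x) ↔ F (x, z) = (y, x) := by
  have key : ∀ a b : Omega L, had a (phi x) = b ↔ had b (phi x) = a := by
    have sq : ∀ k, (phi x).1 k * (phi x).1 k = 1 := by
      intro k; rcases (phi x).2 k with h | h <;> simp [h]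
    intro a b
    constructor <;> intro h <;>
    · apply Subtype.ext; funext k
      have := congrArg (fun f => f.1 k) h
      simp only [had] at this ⊢
      rw [← this]; rw [mul_assoc, sq k, mul_one]
  constructor <;> intro h <;>
  · have h1 := congrArg Prod.fst h
    have h2 := congrArg Prod.snd h
    simp only [F] at h1 h2 ⊢
    exact Prod.ext ((key _ _).mp h1) rfl
end

section
/- Iterated reversibility: For every p ∈ ℕ and all states x, y, u, v ∈ Ω, F^p(x, y) = (u, v) if and only if F^p(v, u) = (y, x), where F^p denotes the p-fold iterate of F. -/
open Q2R

lemma q2r_key {L : ℕ} (q : Omega L × Omega L) :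
    F (Prod.swap (F q)) = Prod.swap q := by
  obtain ⟨x, y⟩ := q
  simp only [F, Prod.swap, had, phi]
  refine Prod.ext ?_ rfl
  apply Subtype.ext
  funext k
  simp only
  by_cases h : nbhdSum x.1 k = 0 <;> simp [h]

lemma q2r_key_iter {L : ℕ} (p : ℕ) (q : Omega L × Omega L) :
    F^[p] (Prod.swap (F^[p] q)) = Prod.swap q := by
  induction p generalizing q with
  | zero => rfl
  | succ n ih =>
    rw [Function.iterate_succ_apply, Function.iterate_succ_apply']
    rw [q2r_key, ih]

/-- Iterated reversibility: `F^p(x, y) = (u, v)` iff `F^p(v, u) = (y, x)`. -/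
theorem q2r_iterated_reversibility (L : ℕ) (hL : 2 ≤ L) (hE : Even L) (p : ℕ)
    (x y u v : Omega L) :
    F^[p] (x, y) = (u, v) ↔ F^[p] (v, u) = (y, x) := by
  constructor
  · intro h
    have := q2r_key_iter p (x, y)
    rw [h] at this
    exact this
  · intro h
    have := q2r_key_iter p (v, u)
    rw [h] at this
    exact this
end

section
/- Characterization of limit cycles of period 2: A configuration (x, y) ∈ Ω × Ω has minimal period 2 under F (i.e. F(F(x,y)) = (x,y) and F(x,y) ≠ (x,y)) if and only if x ≠ y, φ(x) = 𝟙, and φ(y) = 𝟙. -/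
open Q2R

lemma had_one_right {L : ℕ} (y : Omega L) : had y one = y := by
  apply Subtype.ext; funext k; simp [had, one]

lemma had_eq_left_iff {L : ℕ} (y w : Omega L) : had y w = y ↔ w = one := by
  constructor
  · intro h
    apply Subtype.ext; funext k
    have h1 := congrArg (fun z : Omega L => z.1 k) h
    simp only [had] at h1
    have hy : y.1 k ≠ 0 := by rcases y.2 k with h'|h' <;> simp [h']
    have : w.1 k = 1 := mul_left_cancel₀ hy (by rw [h1, mul_one])
    simp [one, this]
  · intro h; rw [h, had_one_right]

/-- Characterization of limit cycles of period 2. -/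
theorem q2r_period_two_iff (L : ℕ) (hL : 2 ≤ L) (hE : Even L) (x y : Omega L) :
    (F (F (x, y)) = (x, y) ∧ F (x, y) ≠ (x, y)) ↔
      (x ≠ y ∧ phi x = one ∧ phi y = one) := by
  constructor
  · rintro ⟨h2, h1⟩
    simp only [F, Prod.mk.injEq] at h2
    obtain ⟨ha, hb⟩ := h2
    have hpx : phi x = one := (had_eq_left_iff y (phi x)).mp hb
    rw [hb] at ha
    have hpy : phi y = one := (had_eq_left_iff x (phi y)).mp ha
    refine ⟨?_, hpx, hpy⟩
    intro hxy
    apply h1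
    simp [F, hpx, hpy, had_one_right, hxy]
  · rintro ⟨hxy, hpx, hpy⟩
    constructor
    · simp [F, hpx, hpy, had_one_right]
    · intro h
      simp only [F, hpx, had_one_right, Prod.mk.injEq] at h
      exact hxy h.2
end

section
/- Characterization of limit cycles of period 3: Let x, y, z ∈ Ω be such that F(x, y) = (z, x), F(z, x) = (y, z), and the three configurations (x,y), (z,x), (y,z) are pairwise distinct. Then all three configurations have minimal period 3 under F if and only if φ(x) ⊙ φ(y) ⊙ φ(z) = 𝟙. -/
open Q2R

lemma omega_ext_iff {L : ℕ} (a b : Omega L) : a = b ↔ ∀ k, a.1 k = b.1 k := by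
  constructor
  · intro h k; rw [h]
  · intro h; exact Subtype.ext (funext h)

lemma key_iff {L : ℕ} (x y z : Omega L)
    (hz : had y (phi x) = z) (hy : had x (phi z) = y) :
    had z (phi y) = x ↔ had (had (phi x) (phi y)) (phi z) = one := by
  rw [omega_ext_iff, omega_ext_iff]
  have hz' : ∀ k, y.1 k * (phi x).1 k = z.1 k :=
    fun k => congrFun (congrArg Subtype.val hz) k
  have hy' : ∀ k, x.1 k * (phi z).1 k = y.1 k :=
    fun k => congrFun (congrArg Subtype.val hy) k
  constructor
  · intro h k
    have hk : z.1 k * (phi y).1 k = x.1 k := h k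
    rw [← hz' k, ← hy' k] at hk
    show (phi x).1 k * (phi y).1 k * (phi z).1 k = 1
    rcases x.2 k with h1 | h1 <;> rcases (phi x).2 k with h2 | h2 <;>
      rcases (phi y).2 k with h3 | h3 <;> rcases (phi z).2 k with h4 | h4 <;>
      simp [had, h1, h2, h3, h4] at hk ⊢
  · intro h k
    have hk : (phi x).1 k * (phi y).1 k * (phi z).1 k = 1 := h k
    show z.1 k * (phi y).1 k = x.1 k
    rw [← hz' k, ← hy' k]
    have hk' := hk
    rcases x.2 k with h1 | h1 <;> rcases (phi x).2 k with h2 | h2 <;>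
      rcases (phi y).2 k with h3 | h3 <;> rcases (phi z).2 k with h4 | h4 <;>
      simp [had, h1, h2, h3, h4] at hk' ⊢

/-- Characterization of limit cycles of period 3. -/
theorem q2r_period_three_iff (L : ℕ) (hL : 2 ≤ L) (hE : Even L) (x y z : Omega L)
    (h1 : F (x, y) = (z, x)) (h2 : F (z, x) = (y, z))
    (hd1 : (x, y) ≠ (z, x)) (hd2 : (z, x) ≠ (y, z)) (hd3 : (x, y) ≠ (y, z)) :
    (IsMinPeriod (x, y) 3 ∧ IsMinPeriod (z, x) 3 ∧ IsMinPeriod (y, z) 3) ↔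
      had (had (phi x) (phi y)) (phi z) = one := by
  have hz : had y (phi x) = z := congrArg Prod.fst h1
  have hy : had x (phi z) = y := congrArg Prod.fst h2
  have hkey := key_iff x y z hz hy
  constructor
  · rintro ⟨⟨hp, _⟩, _, _⟩
    rw [← hkey]
    have h3 : F (y, z) = (x, y) := by
      have : F (F (F (x, y))) = (x, y) := hp
      rwa [h1, h2] at this
    have := congrArg Prod.fst h3
    exact this
  · intro h
    have hx : had z (phi y) = x := hkey.mpr h
    have h3 : F (y, z) = (x, y) := by
      show (had z (phi y), y) = (x, y)
      rw [hx]
    refine ⟨⟨?_, ?_⟩, ⟨?_, ?_⟩, ?_, ?_⟩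
    · show F (F (F (x, y))) = (x, y); rw [h1, h2, h3]
    · intro t ht1 ht2; interval_cases t
      · show F (x, y) ≠ (x, y); rw [h1]; exact hd1.symm
      · show F (F (x, y)) ≠ (x, y); rw [h1, h2]; exact hd3.symm
    · show F (F (F (z, x))) = (z, x); rw [h2, h3, h1]
    · intro t ht1 ht2; interval_cases t
      · show F (z, x) ≠ (z, x); rw [h2]; exact hd2.symm
      · show F (F (z, x)) ≠ (z, x); rw [h2, h3]; exact hd1
    · show F (F (F (y, z))) = (y, z); rw [h3, h1, h2]
    · intro t ht1 ht2; interval_cases t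
      · show F (y, z) ≠ (y, z); rw [h3]; exact hd3
      · show F (F (y, z)) ≠ (y, z); rw [h3, h1]; exact hd2
end

section
/- Every limit cycle of period 3 or higher contains a configuration of type D: if a configuration (x, y) ∈ Ω × Ω has minimal period T ≥ 3 under F, then there exists t ∈ ℕ such that F^t(x, y) = (u, v) with u ≠ v and φ(u) ≠ 𝟙. -/
open Q2R

lemma had_one' {L : ℕ} (x : Omega L) : had x one = x := by
  apply Subtype.ext; funext k; simp [had, one]

lemma had_eq_self {L : ℕ} (x w : Omega L) (h : had x w = x) : w = one := by
  apply Subtype.ext; funext k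
  have hk := congrArg (fun z => z.1 k) h
  simp only [had] at hk
  show w.1 k = 1
  rcases x.2 k with h' | h' <;> rw [h'] at hk <;> linarith



/-- Every limit cycle of period 3 or higher contains a configuration of type D. -/
theorem q2r_exists_type_D (L : ℕ) (hL : 2 ≤ L) (hE : Even L) (x y : Omega L)
    (T : ℕ) (hT : 3 ≤ T) (h : IsMinPeriod (x, y) T) :
    ∃ (t : ℕ) (u v : Omega L), F^[t] (x, y) = (u, v) ∧ u ≠ v ∧ phi u ≠ one := by
  by_contra hCon
  push_neg at hCon
  have hF1 : F^[1] (x, y) = (had y (phi x), x) := rfl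
  by_cases hxy : x = y
  · subst hxy
    by_cases hp : phi x = one
    · exact h.2 1 one_pos (by omega) (by rw [hF1, hp, had_one'])
    · have hne : had x (phi x) ≠ x := fun he => hp (had_eq_self _ _ he)
      have h1 := hCon 1 (had x (phi x)) x hF1 hne
      have hF2 : F^[2] (x, x) = (x, had x (phi x)) := by
        rw [show F^[2] (x, x) = F (F^[1] (x, x)) from Function.iterate_succ_apply' F 1 _, hF1]
        show (had x (phi (had x (phi x))), had x (phi x)) = (x, had x (phi x))
        rw [h1, had_one']
      have h2 := hCon 2 x (had x (phi x)) hF2 (Ne.symm hne)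
      exact hp h2
  · have h0 := hCon 0 x y rfl hxy
    have hF1' : F^[1] (x, y) = (y, x) := by rw [hF1, h0, had_one']
    have h1 := hCon 1 y x hF1' (Ne.symm hxy)
    have hF2 : F^[2] (x, y) = (x, y) := by
      rw [show F^[2] (x, y) = F (F^[1] (x, y)) from Function.iterate_succ_apply' F 1 _, hF1']
      show (had x (phi y), y) = _
      rw [h1, had_one']
    exact h.2 2 two_pos (by omega) hF2
end

section
/- Symmetric/asymmetric dichotomy of limit cycles (part of the attractor classification of Q2R): For every configuration (x, y) ∈ Ω × Ω, let C denote its orbit under F. Then either C is symmetric, meaning that for every (u, v) ∈ C one has (v, u) ∈ C, or C is asymmetric, meaning that for every (u, v) ∈ C one has (v, u) ∉ C. -/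
section Aux

namespace Q2R

variable {L : ℕ}

/-- Explicit inverse of `F`. -/
def Finv : Omega L × Omega L → Omega L × Omega L :=
  fun p => (p.2, had p.1 (phi p.2))

lemma had_had_phi (y x : Omega L) : had (had y (phi x)) (phi x) = y := by
  apply Subtype.ext
  funext k
  show (y.1 k * (phi x).1 k) * (phi x).1 k = y.1 k
  rcases (phi x).2 k with h | h <;> simp [h, mul_assoc]

lemma Finv_F : Function.LeftInverse (Finv (L := L)) F := by
  intro p
  show (p.1, had (had p.2 (phi p.1)) (phi p.1)) = p
  rw [had_had_phi]

lemma swap_F (p : Omega L × Omega L) : Prod.swap (F p) = Finv (Prod.swap p) := rfl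

lemma swap_F_iter (t : ℕ) (p : Omega L × Omega L) :
    Prod.swap (F^[t] p) = Finv^[t] (Prod.swap p) := by
  induction t with
  | zero => rfl
  | succ n ih =>
    rw [Function.iterate_succ_apply', Function.iterate_succ_apply', swap_F, ih]

lemma Finv_iter_F_iter (t : ℕ) (p : Omega L × Omega L) :
    Finv^[t] (F^[t] p) = p :=
  (Finv_F.iterate t) p

lemma F_iter_mul {p : Omega L × Omega L} {T : ℕ} (h : F^[T] p = p) (n : ℕ) :
    F^[n * T] p = p := by
  induction n with
  | zero => simp
  | succ m ih => rw [Nat.succ_mul, Function.iterate_add_apply, h, ih]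

instance [NeZero L] : Finite (Omega L) := by
  have : Function.Injective (fun x : Omega L => fun k => decide (x.1 k = 1)) := by
    intro a b hab
    apply Subtype.ext
    funext k
    have h := congrFun hab k
    simp only [decide_eq_decide] at h
    rcases a.2 k with ha | ha <;> rcases b.2 k with hb | hb <;>
      simp [ha, hb] at h ⊢ <;> omega
  exact Finite.of_injective _ this

lemma exists_period [NeZero L] (p : Omega L × Omega L) :
    ∃ T, 0 < T ∧ F^[T] p = p := by
  have hinj : Function.Injective (F (L := L)) := Finv_F.injective
  obtain ⟨a, b, hne, hab⟩ :=
    Finite.exists_ne_map_eq_of_infinite (fun t : ℕ => F^[t] p)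
  rcases hne.lt_or_gt with h | h
  · refine ⟨b - a, by omega, ?_⟩
    have : F^[a] (F^[b - a] p) = F^[a] p := by
      rw [← Function.iterate_add_apply]
      simpa [Nat.add_sub_cancel' h.le, Nat.add_comm] using hab.symm
    exact (hinj.iterate a) this
  · refine ⟨a - b, by omega, ?_⟩
    have : F^[b] (F^[a - b] p) = F^[b] p := by
      rw [← Function.iterate_add_apply]
      simpa [Nat.add_sub_cancel' h.le, Nat.add_comm] using hab
    exact (hinj.iterate b) this

end Q2R

end Aux

open Q2R

/-- Symmetric/asymmetric dichotomy of limit cycles: every orbit is either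
symmetric or asymmetric. -/
theorem q2r_orbit_symm_dichotomy (L : ℕ) (hL : 2 ≤ L) (hE : Even L)
    (x y : Omega L) :
    (∀ u v : Omega L, (u, v) ∈ orbit (x, y) → (v, u) ∈ orbit (x, y)) ∨
    (∀ u v : Omega L, (u, v) ∈ orbit (x, y) → (v, u) ∉ orbit (x, y)) := by
  haveI : NeZero L := ⟨by omega⟩
  set p : Omega L × Omega L := (x, y) with hp
  by_cases H : ∃ u v : Omega L, (u, v) ∈ orbit p ∧ (v, u) ∈ orbit p
  · left
    obtain ⟨u, v, ⟨s, hs⟩, ⟨r, hr⟩⟩ := H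
    obtain ⟨T, hT0, hT⟩ := Q2R.exists_period p
    intro u' v' ⟨t, ht⟩
    -- t' such that F^[t'] (u, v) = (u', v')
    set t' : ℕ := t + (s * T - s) with ht'
    have key1 : F^[t'] (u, v) = (u', v') := by
      rw [← hs, ← Function.iterate_add_apply]
      have : t' + s = t + s * T := by
        have : s ≤ s * T := Nat.le_mul_of_pos_right s hT0
        omega
      rw [this, Function.iterate_add_apply, Q2R.F_iter_mul hT, ht]
    have key2 : F^[t'] (F^[r + (t' * T - t')] p) = (v, u) := by
      rw [← Function.iterate_add_apply]
      have : t' + (r + (t' * T - t')) = r + t' * T := by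
        have : t' ≤ t' * T := Nat.le_mul_of_pos_right t' hT0
        omega
      rw [this, Function.iterate_add_apply, Q2R.F_iter_mul hT, hr]
    refine ⟨r + (t' * T - t'), ?_⟩
    have : (v', u') = Prod.swap (F^[t'] (u, v)) := by rw [key1]; rfl
    rw [this, Q2R.swap_F_iter]
    have hsw : Prod.swap ((u, v) : Omega L × Omega L) = (v, u) := rfl
    rw [hsw, ← key2, Q2R.Finv_iter_F_iter]
  · right
    push_neg at H
    intro u v hu hv
    exact H u v hu hv
end

section
/- Configurations of an asymmetric limit cycle are of type D: let C be the orbit of a configuration under F and suppose C is asymmetric, i.e. for every (u, v) ∈ C one has (v, u) ∉ C. Then every configuration (u, v) ∈ C satisfies u ≠ v, φ(u) ≠ 𝟙, and φ(v) ≠ 𝟙. -/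
open Q2R

namespace Q2R
variable {L : ℕ}

lemma had_one (v : Omega L) : had v one = v := by
  apply Subtype.ext; funext k; simp [had, one]

lemma had_had_self (v p : Omega L) : had (had v p) p = v := by
  apply Subtype.ext; funext k
  rcases p.2 k with h | h <;> simp [had, h]

lemma F_leftInv (p : Omega L × Omega L) :
    (fun q : Omega L × Omega L => (q.2, had q.1 (phi q.2))) (F p) = p := by
  cases p with
  | mk a b => simp [F, had_had_self]

lemma F_injective : Function.Injective (F (L := L)) :=
  Function.LeftInverse.injective
    (g := fun q : Omega L × Omega L => (q.2, had q.1 (phi q.2))) F_leftInv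

instance inst_s7 [NeZero L] : Finite (Omega L) := by
  apply Finite.of_injective (fun x : Omega L => fun k => decide (x.1 k = 1))
  intro a b hab
  apply Subtype.ext; funext k
  have h := congrFun hab k
  rcases a.2 k with h1 | h1 <;> rcases b.2 k with h2 | h2 <;>
    simp [h1, h2] at h ⊢

end Q2R

/-- Configurations of an asymmetric limit cycle are of type D. -/
theorem q2r_asymmetric_type_D (L : ℕ) (hL : 2 ≤ L) (hE : Even L) (x y : Omega L)
    (hasym : ∀ u v : Omega L, (u, v) ∈ orbit (x, y) → (v, u) ∉ orbit (x, y)) :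
    ∀ u v : Omega L, (u, v) ∈ orbit (x, y) →
      u ≠ v ∧ phi u ≠ one ∧ phi v ≠ one := by
  haveI : NeZero L := ⟨by omega⟩
  intro u v huv
  obtain ⟨t, ht⟩ := huv
  have key : ∀ m n : ℕ, m < n → F^[m] (x, y) = F^[n] (x, y) → F^[n - m] (x, y) = (x, y) := by
    intro m n h hmn
    apply F_injective.iterate m
    rw [← Function.iterate_add_apply, show m + (n - m) = n by omega]
    exact hmn.symm
  obtain ⟨T, hT0, hT⟩ : ∃ T, 0 < T ∧ F^[T] (x, y) = (x, y) := by
    obtain ⟨m, n, hmn, heq⟩ :=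
      Finite.exists_ne_map_eq_of_infinite (fun s : ℕ => F^[s] (x, y))
    rcases lt_or_gt_of_ne hmn with h | h
    · exact ⟨n - m, by omega, key m n h heq⟩
    · exact ⟨m - n, by omega, key n m h heq.symm⟩
  have hpred : F (F^[t + T - 1] (x, y)) = (u, v) := by
    rw [← Function.iterate_succ_apply' F (t + T - 1) (x, y),
      show (t + T - 1).succ = t + T by omega, Function.iterate_add_apply, hT, ht]
  set q := F^[t + T - 1] (x, y) with hqdef
  have hq1 : q.1 = v := by
    have := congrArg Prod.snd hpred
    simpa [F] using this
  have hq2 : had q.2 (phi q.1) = u := by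
    have := congrArg Prod.fst hpred
    simpa [F] using this
  refine ⟨?_, ?_, ?_⟩
  · intro h
    subst h
    exact hasym u u ⟨t, ht⟩ ⟨t, ht⟩
  · intro h
    apply hasym u v ⟨t, ht⟩
    refine ⟨t + 1, ?_⟩
    rw [Function.iterate_succ_apply', ht]
    simp [F, h, had_one]
  · intro h
    apply hasym u v ⟨t, ht⟩
    refine ⟨t + T - 1, ?_⟩
    rw [← hqdef]
    have hq2' : q.2 = u := by
      rw [← hq2, hq1, h, had_one]
    rw [← hq1, ← hq2']
end

section
/- Every limit cycle of Q2R contains at most two self-symmetric configurations: for every configuration (x, y) ∈ Ω × Ω, the orbit C of (x, y) under F satisfies: if (u, u) ∈ C, (v, v) ∈ C and (w, w) ∈ C for states u, v, w ∈ Ω, then u = v or v = w or u = w. (This is the core of the identity stating that the limit cycles of types S-I and S-II, counted with one and two self-symmetric configurations respectively, exhaust the 2^N configurations of the form (x,x).) -/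
open Q2R

namespace Q2RAux

variable {L : ℕ}

/-- Inverse of the Q2R map. -/
def Finv : Omega L × Omega L → Omega L × Omega L := fun p => (p.2, had p.1 (phi p.2))

lemma had_had_self (a b : Omega L) : had (had a b) b = a := by
  apply Subtype.ext
  funext k
  rcases b.2 k with h | h <;> simp [had, h]

lemma F_Finv (p : Omega L × Omega L) : F (Finv p) = p := by
  cases p with
  | mk a b => simp [F, Finv, had_had_self]

lemma Finv_F (p : Omega L × Omega L) : Finv (F p) = p := by
  cases p with
  | mk a b => simp [F, Finv, had_had_self]

lemma swap_F (p : Omega L × Omega L) : Prod.swap (F p) = Finv (Prod.swap p) := by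
  cases p with
  | mk a b => rfl

lemma swap_iterate (n : ℕ) (p : Omega L × Omega L) :
    Prod.swap (F^[n] p) = Finv^[n] (Prod.swap p) := by
  induction n with
  | zero => rfl
  | succ n ih =>
    rw [Function.iterate_succ_apply', Function.iterate_succ_apply', swap_F, ih]

lemma iterate_F_Finv (n : ℕ) (p : Omega L × Omega L) : F^[n] (Finv^[n] p) = p := by
  induction n generalizing p with
  | zero => rfl
  | succ n ih =>
    rw [Function.iterate_succ_apply, Function.iterate_succ_apply', F_Finv, ih]

/-- Time-reversal on symmetric configurations. -/
lemma reversal {s : ℕ} {u v : Omega L} (h : F^[s] (u, u) = (v, v)) :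
    F^[s] (v, v) = (u, u) := by
  have h1 : Finv^[s] ((u, u) : Omega L × Omega L) = (v, v) := by
    have hsw := swap_iterate s ((u, u) : Omega L × Omega L)
    rw [h] at hsw
    simpa using hsw.symm
  calc F^[s] ((v, v) : Omega L × Omega L) = F^[s] (Finv^[s] (u, u)) := by rw [h1]
    _ = (u, u) := iterate_F_Finv s _

lemma F_injective : Function.Injective (F : Omega L × Omega L → Omega L × Omega L) :=
  Function.LeftInverse.injective Finv_F

lemma omega_finite (hL : 0 < L) : Finite (Omega L) := by
  haveI : NeZero L := ⟨by omega⟩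
  apply Finite.of_injective (fun x : Omega L => (fun k => decide (x.1 k = 1) : Site L → Bool))
  intro a b h
  apply Subtype.ext
  funext k
  have hk := congrFun h k
  simp only [decide_eq_decide] at hk
  rcases a.2 k with h1 | h1 <;> rcases b.2 k with h2 | h2 <;> rw [h1, h2] <;> omega

lemma exists_period (hL : 0 < L) (q : Omega L × Omega L) : ∃ T, 0 < T ∧ F^[T] q = q := by
  haveI : Finite (Omega L) := omega_finite hL
  obtain ⟨n, m, hnm, h⟩ := Finite.exists_ne_map_eq_of_infinite (fun t : ℕ => F^[t] q)
  rcases Nat.lt_or_ge n m with hlt | hge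
  · refine ⟨m - n, by omega, ?_⟩
    apply F_injective.iterate n
    rw [← Function.iterate_add_apply, Nat.add_sub_cancel' hlt.le]
    exact h.symm
  · have hlt : m < n := by omega
    refine ⟨n - m, by omega, ?_⟩
    apply F_injective.iterate m
    rw [← Function.iterate_add_apply, Nat.add_sub_cancel' hlt.le]
    exact h

lemma dvd_two_mod {T a : ℕ} (h : T ∣ 2 * a) : T ∣ 2 * (a % T) := by
  apply Nat.dvd_of_mod_eq_zero
  have heq : (2 * (a % T)) % T = (2 * a) % T := by
    rw [Nat.mul_mod, Nat.mod_mod_of_dvd a dvd_rfl, ← Nat.mul_mod]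
  obtain ⟨k, hk⟩ := h
  rw [heq, hk, Nat.mul_mod_right]

lemma zero_or_half {T m : ℕ} (hTpos : 0 < T) (hm : m < T) (h : T ∣ 2 * m) :
    m = 0 ∨ 2 * m = T := by
  obtain ⟨k, hk⟩ := h
  have hklt : k < 2 := by nlinarith
  interval_cases k <;> omega

/-- Core: three symmetric configurations at increasing times force a coincidence. -/
lemma key (hL : 0 < L) {p : Omega L × Omega L} {u v w : Omega L} {a b c : ℕ}
    (hab : a ≤ b) (hbc : b ≤ c)
    (ha : F^[a] p = (u, u)) (hb : F^[b] p = (v, v)) (hc : F^[c] p = (w, w)) :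
    u = v ∨ v = w ∨ u = w := by
  set s := b - a with hs_def
  set r := c - b with hr_def
  have hs : F^[s] ((u, u) : Omega L × Omega L) = (v, v) := by
    rw [← ha, ← Function.iterate_add_apply, show s + a = b by omega]; exact hb
  have hr : F^[r] ((v, v) : Omega L × Omega L) = (w, w) := by
    rw [← hb, ← Function.iterate_add_apply, show r + b = c by omega]; exact hc
  have hsr : F^[r + s] ((u, u) : Omega L × Omega L) = (w, w) := by
    rw [Function.iterate_add_apply, hs, hr]
  obtain ⟨T0, hT0pos, hT0⟩ := exists_period hL ((u, u) : Omega L × Omega L)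
  have hper : Function.IsPeriodicPt F T0 ((u, u) : Omega L × Omega L) := hT0
  set T := Function.minimalPeriod F ((u, u) : Omega L × Omega L) with hT_def
  have hTpos : 0 < T := hper.minimalPeriod_pos hT0pos
  have hperu : Function.IsPeriodicPt F T ((u, u) : Omega L × Omega L) :=
    Function.isPeriodicPt_minimalPeriod F _
  -- T divides 2s and 2(r+s)
  have h2s : T ∣ 2 * s := by
    apply Function.IsPeriodicPt.minimalPeriod_dvd
    show F^[2 * s] _ = _
    rw [two_mul, Function.iterate_add_apply, hs, reversal hs]
  have h2sr : T ∣ 2 * (r + s) := by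
    apply Function.IsPeriodicPt.minimalPeriod_dvd
    show F^[2 * (r + s)] _ = _
    rw [two_mul, Function.iterate_add_apply, hsr, reversal hsr]
  have hmlt : s % T < T := Nat.mod_lt _ hTpos
  have hnlt : (r + s) % T < T := Nat.mod_lt _ hTpos
  rcases zero_or_half hTpos hmlt (dvd_two_mod h2s) with hm0 | hmT
  · -- s % T = 0 : u = v
    left
    have : F^[s % T] ((u, u) : Omega L × Omega L) = (v, v) := by
      rw [Function.iterate_mod_minimalPeriod_eq]; exact hs
    rw [hm0] at this
    simp only [Function.iterate_zero_apply, Prod.mk.injEq] at this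
    exact this.1
  rcases zero_or_half hTpos hnlt (dvd_two_mod h2sr) with hn0 | hnT
  · -- (r+s) % T = 0 : u = w
    right; right
    have : F^[(r + s) % T] ((u, u) : Omega L × Omega L) = (w, w) := by
      rw [Function.iterate_mod_minimalPeriod_eq]; exact hsr
    rw [hn0] at this
    simp only [Function.iterate_zero_apply, Prod.mk.injEq] at this
    exact this.1
  · -- both halves: r % T = 0, hence v = w
    right; left
    have hradd : (r + s) % T = (r % T + s % T) % T := Nat.add_mod r s T
    have hrlt : r % T < T := Nat.mod_lt _ hTpos
    have hr0 : r % T = 0 := by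
      rcases Nat.lt_or_ge (r % T + s % T) T with hlt | hge
      · rw [Nat.mod_eq_of_lt hlt] at hradd; omega
      · have hsub : (r % T + s % T) % T = (r % T + s % T - T) % T :=
          Nat.mod_eq_sub_mod hge
        have hlt2 : r % T + s % T - T < T := by omega
        rw [hsub, Nat.mod_eq_of_lt hlt2] at hradd
        omega
    have hperv : Function.IsPeriodicPt F T ((v, v) : Omega L × Omega L) := by
      show F^[T] _ = _
      rw [← hs, ← Function.iterate_add_apply, add_comm,
        Function.iterate_add_apply, hperu.eq, hs]
    obtain ⟨k, hk⟩ := Nat.dvd_of_mod_eq_zero hr0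
    have : F^[r] ((v, v) : Omega L × Omega L) = (v, v) := by
      rw [hk]; exact (hperv.mul_const k).eq
    rw [hr] at this
    simp only [Prod.mk.injEq] at this
    exact this.1.symm

end Q2RAux

open Q2RAux

/-- Every limit cycle of Q2R contains at most two self-symmetric configurations. -/
theorem q2r_at_most_two_self_symmetric (L : ℕ) (hL : 2 ≤ L) (hE : Even L)
    (x y u v w : Omega L)
    (hu : (u, u) ∈ orbit (x, y)) (hv : (v, v) ∈ orbit (x, y))
    (hw : (w, w) ∈ orbit (x, y)) :
    u = v ∨ v = w ∨ u = w := by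
  obtain ⟨a, ha⟩ := hu
  obtain ⟨b, hb⟩ := hv
  obtain ⟨c, hc⟩ := hw
  rcases le_total a b with h1 | h1
  · rcases le_total b c with h2 | h2
    · exact key (by omega) h1 h2 ha hb hc
    · rcases le_total a c with h3 | h3
      · rcases key (by omega) h3 h2 ha hc hb with e | e | e <;> subst e <;> simp
      · rcases key (by omega) h3 h1 hc ha hb with e | e | e <;> subst e <;> simp
  · rcases le_total b c with h2 | h2
    · rcases le_total a c with h3 | h3
      · rcases key (by omega) h1 h3 hb ha hc with e | e | e <;> subst e <;> simp
      · rcases key (by omega) h2 h3 hb hc ha with e | e | e <;> subst e <;> simp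
    · rcases key (by omega) h2 h1 hc hb ha with e | e | e <;> subst e <;> simp
end

section
/- Abundance of period-3 configurations: for every even L ≥ 4, the set P₃ of configurations of minimal period 3 under F satisfies |P₃| ≥ 6·L². -/
open Q2R

namespace Q2Raux
open Q2R

variable {L : ℕ}

lemma Omega.ext {x y : Omega L} (h : ∀ k, x.1 k = y.1 k) : x = y :=
  Subtype.ext (funext h)

/-- The 2×2 block predicate. -/
def blkP (a k : Site L) : Prop :=
  (k.1 - a.1 = 0 ∨ k.1 - a.1 = 1) ∧ (k.2 - a.2 = 0 ∨ k.2 - a.2 = 1)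

instance (a k : Site L) : Decidable (blkP a k) := by unfold blkP; infer_instance

/-- The state flipping the 2×2 block at `a`. -/
def blk (a : Site L) : Omega L :=
  ⟨fun k => if blkP a k then -1 else 1, fun k => by
    by_cases h : blkP a k <;> simp [h]⟩

lemma zkey (h1 : (1:ZMod L) ≠ 0) (h2 : (2:ZMod L) ≠ 0) (h3 : (3:ZMod L) ≠ 0)
    (s t : ZMod L) :
    ((if ((s+1=0 ∨ s+1=1) ∧ (t=0∨t=1)) then (-1:ℤ) else 1)
   + (if ((s-1=0 ∨ s-1=1) ∧ (t=0∨t=1)) then -1 else 1)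
   + (if ((s=0∨s=1) ∧ (t+1=0∨t+1=1)) then -1 else 1)
   + (if ((s=0∨s=1) ∧ (t-1=0∨t-1=1)) then -1 else 1) = 0)
   ↔ ((s=0∨s=1) ∧ (t=0∨t=1)) := by
  have e1 : ∀ u : ZMod L, (u + 1 = 0) ↔ (u = -1) := fun u => by
    constructor <;> intro h <;> linear_combination h
  have e2 : ∀ u : ZMod L, (u + 1 = 1) ↔ (u = 0) := fun u => by
    constructor <;> intro h <;> linear_combination h
  have e3 : ∀ u : ZMod L, (u - 1 = 0) ↔ (u = 1) := fun u => by
    constructor <;> intro h <;> linear_combination h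
  have e4 : ∀ u : ZMod L, (u - 1 = 1) ↔ (u = 2) := fun u => by
    constructor <;> intro h <;> linear_combination h
  simp only [e1, e2, e3, e4]
  have d1 : (-1 : ZMod L) ≠ 0 := fun h => h1 (by linear_combination -h)
  have d2 : (-1 : ZMod L) ≠ 1 := fun h => h2 (by linear_combination -h)
  have d3 : (-1 : ZMod L) ≠ 2 := fun h => h3 (by linear_combination -h)
  have d4 : (0 : ZMod L) ≠ 1 := fun h => h1 (by linear_combination -h)
  have d5 : (0 : ZMod L) ≠ 2 := fun h => h2 (by linear_combination -h)
  have d6 : (1 : ZMod L) ≠ 2 := fun h => h1 (by linear_combination -h)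
  have hs : s = -1 ∨ s = 0 ∨ s = 1 ∨ s = 2 ∨ (s ≠ -1 ∧ s ≠ 0 ∧ s ≠ 1 ∧ s ≠ 2) := by tauto
  have ht : t = -1 ∨ t = 0 ∨ t = 1 ∨ t = 2 ∨ (t ≠ -1 ∧ t ≠ 0 ∧ t ≠ 1 ∧ t ≠ 2) := by tauto
  rcases hs with hs|hs|hs|hs|⟨ha,hb,hc,hd⟩ <;>
    rcases ht with ht|ht|ht|ht|⟨ha',hb',hc',hd'⟩ <;>
    simp_all [d1, d2, d3, d4, d5, d6, d1.symm, d2.symm, d3.symm, d4.symm, d5.symm, d6.symm]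

lemma zfacts (hL : 4 ≤ L) : (1:ZMod L) ≠ 0 ∧ (2:ZMod L) ≠ 0 ∧ (3:ZMod L) ≠ 0 := by
  haveI : NeZero L := ⟨by omega⟩
  have key : ∀ m : ℕ, 0 < m → m < L → ((m:ℕ) : ZMod L) ≠ 0 := by
    intro m hm hmL h
    rw [ZMod.natCast_eq_zero_iff] at h
    have := Nat.le_of_dvd hm h
    omega
  refine ⟨?_, ?_, ?_⟩
  · simpa using key 1 (by omega) (by omega)
  · simpa using key 2 (by omega) (by omega)
  · simpa using key 3 (by omega) (by omega)

lemma nbhdSum_blk (hL : 4 ≤ L) (a k : Site L) :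
    nbhdSum (blk a).1 k = 0 ↔ blkP a k := by
  obtain ⟨h1, h2, h3⟩ := zfacts hL
  have c1 : blkP a (k + ((1:ZMod L), (0:ZMod L))) ↔
      (((k.1 - a.1)+1=0 ∨ (k.1 - a.1)+1=1) ∧ ((k.2 - a.2)=0 ∨ (k.2 - a.2)=1)) := by
    unfold blkP
    have e : k.1 + 1 - a.1 = (k.1 - a.1) + 1 := by ring
    have e' : k.2 + 0 - a.2 = k.2 - a.2 := by ring
    simp only [Prod.fst_add, Prod.snd_add, e, e']
  have c2 : blkP a (k - ((1:ZMod L), (0:ZMod L))) ↔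
      (((k.1 - a.1)-1=0 ∨ (k.1 - a.1)-1=1) ∧ ((k.2 - a.2)=0 ∨ (k.2 - a.2)=1)) := by
    unfold blkP
    have e : k.1 - 1 - a.1 = (k.1 - a.1) - 1 := by ring
    have e' : k.2 - 0 - a.2 = k.2 - a.2 := by ring
    simp only [Prod.fst_sub, Prod.snd_sub, e, e']
  have c3 : blkP a (k + ((0:ZMod L), (1:ZMod L))) ↔
      (((k.1 - a.1)=0 ∨ (k.1 - a.1)=1) ∧ ((k.2 - a.2)+1=0 ∨ (k.2 - a.2)+1=1)) := by
    unfold blkP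
    have e : k.1 + 0 - a.1 = k.1 - a.1 := by ring
    have e' : k.2 + 1 - a.2 = (k.2 - a.2) + 1 := by ring
    simp only [Prod.fst_add, Prod.snd_add, e, e']
  have c4 : blkP a (k - ((0:ZMod L), (1:ZMod L))) ↔
      (((k.1 - a.1)=0 ∨ (k.1 - a.1)=1) ∧ ((k.2 - a.2)-1=0 ∨ (k.2 - a.2)-1=1)) := by
    unfold blkP
    have e : k.1 - 0 - a.1 = k.1 - a.1 := by ring
    have e' : k.2 - 1 - a.2 = (k.2 - a.2) - 1 := by ring
    simp only [Prod.fst_sub, Prod.snd_sub, e, e']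
  show (if blkP a (k + (1,0)) then (-1:ℤ) else 1)
      + (if blkP a (k - (1,0)) then -1 else 1)
      + (if blkP a (k + (0,1)) then -1 else 1)
      + (if blkP a (k - (0,1)) then -1 else 1) = 0 ↔ blkP a k
  simp only [c1, c2, c3, c4]
  exact zkey h1 h2 h3 (k.1 - a.1) (k.2 - a.2)

lemma blkP_self (a : Site L) : blkP a a := ⟨Or.inl (sub_self _), Or.inl (sub_self _)⟩

lemma one_apply (k : Site L) : (one : Omega L).1 k = 1 := rfl

lemma blk_ne_one (a : Site L) : blk a ≠ one := by
  intro h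
  have := congrArg (fun z : Omega L => z.1 a) h
  simp only [blk, one, if_pos (blkP_self a)] at this
  norm_num at this

lemma phi_one : phi (one : Omega L) = one :=
  Omega.ext fun k => by
    show (if nbhdSum (one : Omega L).1 k = 0 then (-1:ℤ) else 1) = 1
    rw [if_neg]
    show ¬((1:ℤ) + 1 + 1 + 1 = 0)
    norm_num

lemma phi_blk (hL : 4 ≤ L) (a : Site L) : phi (blk a) = blk a :=
  Omega.ext fun k => by
    show (if nbhdSum (blk a).1 k = 0 then (-1:ℤ) else 1) = (if blkP a k then -1 else 1)
    exact if_congr (nbhdSum_blk hL a k) rfl rfl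

lemma had_one_left (x : Omega L) : had one x = x :=
  Omega.ext fun k => one_mul _

lemma had_one_right (x : Omega L) : had x one = x :=
  Omega.ext fun k => mul_one _

lemma had_self (x : Omega L) : had x x = one :=
  Omega.ext fun k => by
    show x.1 k * x.1 k = 1
    rcases x.2 k with h | h <;> rw [h] <;> norm_num

lemma neg_apply (x : Omega L) (k : Site L) : (neg x).1 k = -(x.1 k) := neg_one_mul _

lemma neg_neg' (x : Omega L) : neg (neg x) = x :=
  Omega.ext fun k => by rw [neg_apply, neg_apply, neg_neg]

lemma neg_inj' {x y : Omega L} (h : neg x = neg y) : x = y := by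
  rw [← neg_neg' x, h, neg_neg']

lemma nbhdSum_neg (x : Omega L) (k : Site L) :
    nbhdSum (neg x).1 k = -(nbhdSum x.1 k) := by
  show (neg x).1 (k + (1,0)) + (neg x).1 (k - (1,0)) + (neg x).1 (k + (0,1))
      + (neg x).1 (k - (0,1)) = -(nbhdSum x.1 k)
  rw [neg_apply, neg_apply, neg_apply, neg_apply]
  unfold nbhdSum
  ring

lemma phi_neg (x : Omega L) : phi (neg x) = phi x :=
  Omega.ext fun k => by
    show (if nbhdSum (neg x).1 k = 0 then (-1:ℤ) else 1)
        = (if nbhdSum x.1 k = 0 then -1 else 1)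
    rw [nbhdSum_neg]
    exact if_congr neg_eq_zero rfl rfl

lemma had_neg_left (x y : Omega L) : had (neg x) y = neg (had x y) :=
  Omega.ext fun k => by
    show (neg x).1 k * y.1 k = (neg (had x y)).1 k
    rw [neg_apply, neg_apply]
    show -(x.1 k) * y.1 k = -(x.1 k * y.1 k)
    ring

/-- Negation of a configuration. -/
def np (p : Omega L × Omega L) : Omega L × Omega L := (neg p.1, neg p.2)

lemma F_np (p : Omega L × Omega L) : F (np p) = np (F p) := by
  show (had (neg p.2) (phi (neg p.1)), neg p.1) = (neg (had p.2 (phi p.1)), neg p.1)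
  rw [phi_neg, had_neg_left]

lemma iterate_np (t : ℕ) (p : Omega L × Omega L) : F^[t] (np p) = np (F^[t] p) := by
  induction t with
  | zero => rfl
  | succ n ih =>
    rw [Function.iterate_succ_apply', ih, F_np, Function.iterate_succ_apply']

lemma isMinPeriod_np {p : Omega L × Omega L} {T : ℕ} (h : IsMinPeriod p T) :
    IsMinPeriod (np p) T := by
  constructor
  · rw [iterate_np, h.1]
  · intro t ht1 ht2 hc
    rw [iterate_np] at hc
    exact h.2 t ht1 ht2 (by
      have := congrArg np hc
      simpa [np, neg_neg'] using this)

lemma F_step1 (a : Site L) : F ((one : Omega L), blk a) = (blk a, one) := by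
  show (had (blk a) (phi one), (one : Omega L)) = (blk a, one)
  rw [phi_one, had_one_right]

lemma F_step2 (hL : 4 ≤ L) (a : Site L) : F (blk a, (one : Omega L)) = (blk a, blk a) := by
  show (had one (phi (blk a)), blk a) = (blk a, blk a)
  rw [phi_blk hL, had_one_left]

lemma F_step3 (hL : 4 ≤ L) (a : Site L) : F (blk a, blk a) = ((one : Omega L), blk a) := by
  show (had (blk a) (phi (blk a)), blk a) = ((one : Omega L), blk a)
  rw [phi_blk hL, had_self]

lemma iter3 (p : Omega L × Omega L) : F^[3] p = F (F (F p)) := rfl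
lemma iter2 (p : Omega L × Omega L) : F^[2] p = F (F p) := rfl
lemma iter1 (p : Omega L × Omega L) : F^[1] p = F p := rfl

lemma minp0 (hL : 4 ≤ L) (a : Site L) : IsMinPeriod ((one : Omega L), blk a) 3 := by
  have h3 : F^[3] ((one : Omega L), blk a) = (one, blk a) := by
    rw [iter3, F_step1, F_step2 hL, F_step3 hL]
  refine ⟨h3, ?_⟩
  intro t ht1 ht3
  interval_cases t
  · rw [iter1, F_step1]
    intro h
    exact blk_ne_one a (congrArg Prod.fst h)
  · rw [iter2, F_step1, F_step2 hL]
    intro h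
    exact blk_ne_one a (congrArg Prod.fst h)

lemma minp1 (hL : 4 ≤ L) (a : Site L) : IsMinPeriod (blk a, (one : Omega L)) 3 := by
  have h3 : F^[3] (blk a, (one : Omega L)) = (blk a, one) := by
    rw [iter3, F_step2 hL, F_step3 hL, F_step1]
  refine ⟨h3, ?_⟩
  intro t ht1 ht3
  interval_cases t
  · rw [iter1, F_step2 hL]
    intro h
    exact blk_ne_one a (congrArg Prod.snd h)
  · rw [iter2, F_step2 hL, F_step3 hL]
    intro h
    exact blk_ne_one a (congrArg Prod.fst h).symm

lemma minp2 (hL : 4 ≤ L) (a : Site L) : IsMinPeriod (blk a, blk a) 3 := by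
  have h3 : F^[3] (blk a, blk a) = (blk a, blk a) := by
    rw [iter3, F_step3 hL, F_step1, F_step2 hL]
  refine ⟨h3, ?_⟩
  intro t ht1 ht3
  interval_cases t
  · rw [iter1, F_step3 hL]
    intro h
    exact blk_ne_one a (congrArg Prod.fst h).symm
  · rw [iter2, F_step3 hL, F_step1]
    intro h
    exact blk_ne_one a (congrArg Prod.snd h).symm

end Q2Raux
namespace Q2Raux
open Q2R
variable {L : ℕ}

lemma sub_two_ne (h1 : (1:ZMod L) ≠ 0) (h2 : (2:ZMod L) ≠ 0) :
    ¬((2:ZMod L) = 0 ∨ (2:ZMod L) = 1) := by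
  rintro (h | h)
  · exact h2 h
  · exact h1 (by linear_combination h)

lemma blk_apply_out (h1 : (1:ZMod L) ≠ 0) (h2 : (2:ZMod L) ≠ 0) (a : Site L) (j : ZMod L) :
    (blk a).1 (a + ((2:ZMod L), j)) = 1 := by
  show (if blkP a (a + (2, j)) then (-1:ℤ) else 1) = 1
  rw [if_neg]
  intro hb
  have := hb.1
  rw [Prod.fst_add] at this
  have e : a.1 + 2 - a.1 = (2:ZMod L) := by ring
  rw [e] at this
  exact sub_two_ne h1 h2 this

lemma one_ne_neg_one : (one : Omega L) ≠ neg one := by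
  intro h
  have : (one : Omega L).1 0 = (neg one).1 0 := congrArg (fun z : Omega L => z.1 0) h
  rw [neg_apply] at this
  norm_num [one_apply] at this

lemma one_ne_neg_blk (hL : 4 ≤ L) (a : Site L) : (one : Omega L) ≠ neg (blk a) := by
  obtain ⟨h1, h2, _⟩ := zfacts hL
  intro h
  have := congrArg (fun z : Omega L => z.1 (a + (2, 0))) h
  simp only [neg_apply] at this
  rw [blk_apply_out h1 h2] at this
  norm_num [one_apply] at this

lemma blk_ne_neg_one (hL : 4 ≤ L) (a : Site L) : blk a ≠ neg (one : Omega L) := by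
  obtain ⟨h1, h2, _⟩ := zfacts hL
  intro h
  have := congrArg (fun z : Omega L => z.1 (a + (2, 0))) h
  simp only [neg_apply] at this
  rw [blk_apply_out h1 h2] at this
  norm_num [one_apply] at this

lemma blk_ne_neg_blk (hL : 4 ≤ L) (a b : Site L) : blk a ≠ neg (blk b) := by
  obtain ⟨h1, h2, h3⟩ := zfacts hL
  intro h
  have key : ∀ j : ZMod L, blkP b (a + ((2:ZMod L), j)) := by
    intro j
    have := congrArg (fun z : Omega L => z.1 (a + (2, j))) h
    simp only [neg_apply] at this
    rw [blk_apply_out h1 h2] at this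
    by_contra hc
    have : (blk b).1 (a + (2, j)) = 1 := if_neg hc
    omega
  have k0 := (key 0).2
  have k2 := (key 2).2
  rw [Prod.snd_add] at k0 k2
  set v := a.2 + 0 - b.2 with hv
  have e : a.2 + 2 - b.2 = v + 2 := by rw [hv]; ring
  rw [e] at k2
  rcases k0 with h0 | h0 <;> rcases k2 with h4 | h4
  · rw [h0, zero_add] at h4; exact h2 h4
  · rw [h0, zero_add] at h4; exact h1 (by linear_combination h4)
  · rw [h0] at h4; exact h3 (by linear_combination h4)
  · rw [h0] at h4; exact h2 (by linear_combination h4)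

lemma blk_inj (hL : 4 ≤ L) {a b : Site L} (h : blk a = blk b) : a = b := by
  obtain ⟨h1, h2, _⟩ := zfacts hL
  have hab : blkP b a := by
    have := congrArg (fun z : Omega L => z.1 a) h
    simp only [blk, if_pos (blkP_self a)] at this
    by_contra hc
    rw [if_neg hc] at this
    norm_num at this
  have hba : blkP a b := by
    have := congrArg (fun z : Omega L => z.1 b) h
    simp only [blk, if_pos (blkP_self b)] at this
    by_contra hc
    rw [if_neg hc] at this
    norm_num at this
  have c1 : a.1 = b.1 := by
    rcases hab.1 with hu | hu <;> rcases hba.1 with hv | hv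
    · exact sub_eq_zero.mp hu
    · exact absurd (show (1:ZMod L) = 0 by linear_combination -hu - hv) h1
    · exact absurd (show (1:ZMod L) = 0 by linear_combination -hu - hv) h1
    · exact absurd (show (2:ZMod L) = 0 by linear_combination -hu - hv) h2
  have c2 : a.2 = b.2 := by
    rcases hab.2 with hu | hu <;> rcases hba.2 with hv | hv
    · exact sub_eq_zero.mp hu
    · exact absurd (show (1:ZMod L) = 0 by linear_combination -hu - hv) h1
    · exact absurd (show (1:ZMod L) = 0 by linear_combination -hu - hv) h1
    · exact absurd (show (2:ZMod L) = 0 by linear_combination -hu - hv) h2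
  exact Prod.ext c1 c2

end Q2Raux
namespace Q2Raux
open Q2R
variable {L : ℕ}

/-- The six-fold family of period-3 configurations. -/
def fam (n : ℕ) (a : Site L) : Omega L × Omega L :=
  match n with
  | 0 => (one, blk a)
  | 1 => (blk a, one)
  | 2 => (blk a, blk a)
  | 3 => np (one, blk a)
  | 4 => np (blk a, one)
  | _ => np (blk a, blk a)

lemma fam_mem (hL : 4 ≤ L) (n : ℕ) (a : Site L) : IsMinPeriod (fam n a) 3 := by
  match n with
  | 0 => exact minp0 hL a
  | 1 => exact minp1 hL a
  | 2 => exact minp2 hL a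
  | 3 => exact isMinPeriod_np (minp0 hL a)
  | 4 => exact isMinPeriod_np (minp1 hL a)
  | n + 5 => exact isMinPeriod_np (minp2 hL a)

lemma fam_inj (hL : 4 ≤ L) {i j : Fin 6} {a b : Site L}
    (h : fam i.val a = fam j.val b) : i = j ∧ a = b := by
  have hne1 : ∀ c : Site L, (one : Omega L) ≠ blk c := fun c hc => blk_ne_one c hc.symm
  have hne2 : ∀ c : Site L, neg (one : Omega L) ≠ neg (blk c) :=
    fun c hc => hne1 c (neg_inj' hc)
  fin_cases i <;> fin_cases j <;>
    simp only [fam, np, Prod.mk.injEq, Fin.isValue, Fin.val_zero, Fin.val_one] at h ⊢ <;>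
  first
  | exact ⟨rfl, blk_inj hL h.1⟩
  | exact ⟨rfl, blk_inj hL h.2⟩
  | exact ⟨rfl, blk_inj hL (neg_inj' h.1)⟩
  | exact ⟨rfl, blk_inj hL (neg_inj' h.2)⟩
  | exact ⟨trivial, blk_inj hL h.1⟩
  | exact ⟨trivial, blk_inj hL (neg_inj' h.1)⟩
  | exact ⟨trivial, blk_inj hL h.2⟩
  | exact ⟨trivial, blk_inj hL (neg_inj' h.2)⟩
  | exact absurd h.1 (hne1 _)
  | exact absurd h.1.symm (hne1 _)
  | exact absurd h.2 (hne1 _)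
  | exact absurd h.2.symm (hne1 _)
  | exact absurd h.1 one_ne_neg_one
  | exact absurd h.1.symm one_ne_neg_one
  | exact absurd h.2 one_ne_neg_one
  | exact absurd h.2.symm one_ne_neg_one
  | exact absurd h.1 (one_ne_neg_blk hL _)
  | exact absurd h.1.symm (one_ne_neg_blk hL _)
  | exact absurd h.2 (one_ne_neg_blk hL _)
  | exact absurd h.2.symm (one_ne_neg_blk hL _)
  | exact absurd h.1 (blk_ne_neg_one hL _)
  | exact absurd h.1.symm (blk_ne_neg_one hL _)
  | exact absurd h.2 (blk_ne_neg_one hL _)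
  | exact absurd h.2.symm (blk_ne_neg_one hL _)
  | exact absurd h.1 (blk_ne_neg_blk hL _ _)
  | exact absurd h.1.symm (blk_ne_neg_blk hL _ _)
  | exact absurd h.2 (blk_ne_neg_blk hL _ _)
  | exact absurd h.2.symm (blk_ne_neg_blk hL _ _)
  | exact absurd h.1 (hne2 _)
  | exact absurd h.1.symm (hne2 _)
  | exact absurd h.2 (hne2 _)
  | exact absurd h.2.symm (hne2 _)

lemma omega_finite (hL : 4 ≤ L) : Finite (Omega L) := by
  haveI : NeZero L := ⟨by omega⟩
  apply Finite.of_injective (fun (x : Omega L) (k : Site L) => decide (x.1 k = 1))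
  intro x y h
  apply Subtype.ext
  funext k
  have hk : decide (x.1 k = 1) = decide (y.1 k = 1) := congrFun h k
  rcases x.2 k with h1 | h1 <;> rcases y.2 k with h2 | h2 <;>
    simp [h1, h2] at hk ⊢
end Q2Raux

/-- Abundance of period-3 configurations: for even `L ≥ 4`, `|P₃| ≥ 6·L²`. -/
theorem q2r_card_P3 (L : ℕ) (hL : 4 ≤ L) (hE : Even L) :
    6 * L ^ 2 ≤ Nat.card {p : Omega L × Omega L | IsMinPeriod p 3} := by
  haveI : NeZero L := ⟨by omega⟩
  haveI : Finite (Omega L) := Q2Raux.omega_finite hL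
  have hg : Function.Injective
      (fun q : Fin 6 × Site L =>
        (⟨Q2Raux.fam q.1.val q.2, Q2Raux.fam_mem hL q.1.val q.2⟩ :
          {p : Omega L × Omega L | IsMinPeriod p 3})) := by
    rintro ⟨i, a⟩ ⟨j, b⟩ h
    rw [Subtype.mk.injEq] at h
    obtain ⟨h1, h2⟩ := Q2Raux.fam_inj hL h
    exact Prod.ext h1 h2
  have hcard : Nat.card (Fin 6 × Site L) = 6 * L ^ 2 := by
    simp [Nat.card_prod, Nat.card_zmod, Nat.card_eq_fintype_card]
    ring
  calc 6 * L ^ 2 = Nat.card (Fin 6 × Site L) := hcard.symm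
    _ ≤ _ := Nat.card_le_card_of_injective _ hg
end

section
/- If the neighborhood considered in the definition of a Q2R-type dynamics has an odd number of nodes, then the dynamics has only fixed points and period-2 limit cycles: let ι be a finite type and V : ι → Finset ι with |V(i)| odd for every i ∈ ι; define φ_V(x)(i) = -1 if Σ_{j ∈ V(i)} x(j) = 0 and φ_V(x)(i) = 1 otherwise, for states x : ι → {-1,1}, and F_V(x,y) = (y ⊙ φ_V(x), x). Then F_V ∘ F_V is the identity; in particular every configuration is a fixed point of F_V or has minimal period 2 under F_V. -/
/-- States over an arbitrary finite index type `ι`: functions `ι → ℤ` with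
values in `{-1, 1}`. -/
def StateV (ι : Type*) := {x : ι → ℤ // ∀ i, x i = 1 ∨ x i = -1}

namespace Q2RV

variable {ι : Type*}

/-- The map `φ_V` associated to the neighborhood assignment `V`. -/
def phiV (V : ι → Finset ι) (x : StateV ι) : StateV ι :=
  ⟨fun i => if ∑ j ∈ V i, x.1 j = 0 then -1 else 1, fun i => by
    by_cases h : ∑ j ∈ V i, x.1 j = 0 <;> simp [h]⟩

/-- Hadamard (pointwise) product. -/
def hadV (x y : StateV ι) : StateV ι :=
  ⟨fun i => x.1 i * y.1 i, fun i => by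
    rcases x.2 i with h | h <;> rcases y.2 i with h' | h' <;> simp [h, h']⟩

/-- The Q2R-type map `F_V(x, y) = (y ⊙ φ_V(x), x)`. -/
def FV (V : ι → Finset ι) : StateV ι × StateV ι → StateV ι × StateV ι :=
  fun p => (hadV p.2 (phiV V p.1), p.1)

end Q2RV

open Q2RV

lemma odd_sum {ι : Type*} (s : Finset ι) (x : StateV ι) (hs : Odd s.card) :
    Odd (∑ j ∈ s, x.1 j) := by
  have hcast : ((∑ j ∈ s, x.1 j : ℤ) : ZMod 2) = (s.card : ZMod 2) := by
    push_cast
    rw [Finset.card_eq_sum_ones s]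
    push_cast
    apply Finset.sum_congr rfl
    intro j _
    rcases x.2 j with h | h <;> simp [h] <;> decide
  rw [Int.not_even_iff_odd.symm, even_iff_two_dvd]
  rw [show (2:ℤ) = ((2:ℕ):ℤ) from rfl, ← ZMod.intCast_zmod_eq_zero_iff_dvd, hcast]
  rw [ZMod.natCast_eq_zero_iff]
  exact fun h => (Nat.not_even_iff_odd.mpr hs) (even_iff_two_dvd.mpr h)

lemma FV_eq {ι : Type*} (V : ι → Finset ι) (hV : ∀ i, Odd (V i).card)
    (p : StateV ι × StateV ι) : FV V p = (p.2, p.1) := by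
  have h1 : FV V p = (hadV p.2 (phiV V p.1), p.1) := rfl
  rw [h1]
  congr 1
  apply Subtype.ext
  funext i
  have hne : ∑ j ∈ V i, p.1.1 j ≠ 0 := by
    intro h
    have := odd_sum (V i) p.1 (hV i)
    rw [h] at this
    simp at this
  simp [hadV, phiV, hne]


/-- If every neighborhood has an odd number of nodes, then `F_V ∘ F_V = id`;
in particular every configuration is a fixed point of `F_V` or has minimal
period 2 under `F_V`. -/
theorem q2r_odd_neighborhood (ι : Type*) [Fintype ι] (V : ι → Finset ι)
    (hV : ∀ i, Odd (V i).card) :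
    (FV V ∘ FV V = id) ∧
      ∀ p : StateV ι × StateV ι,
        FV V p = p ∨ (FV V (FV V p) = p ∧ FV V p ≠ p) := by
  have key : ∀ p, FV V (FV V p) = p := by
    intro p
    rw [FV_eq V hV, FV_eq V hV]
  refine ⟨funext fun p => key p, fun p => ?_⟩
  by_cases h : FV V p = p
  · exact Or.inl h
  · exact Or.inr ⟨key p, h⟩
end

section
/- Necessary condition for odd-period limit cycles: let T be an odd positive integer and suppose F^T(x⁰, y⁰) = (x⁰, y⁰). For 0 ≤ t < T let x^t denote the first component of F^t(x⁰, y⁰). Then the Hadamard product φ(x⁰) ⊙ φ(x¹) ⊙ ⋯ ⊙ φ(x^{T-1}) equals 𝟙. -/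
open Q2R

/-- Necessary condition for odd-period limit cycles: the Hadamard product
`φ(x⁰) ⊙ φ(x¹) ⊙ ⋯ ⊙ φ(x^{T-1})` equals `𝟙` (stated pointwise). -/
theorem q2r_odd_period_condition (L : ℕ) (hL : 2 ≤ L) (hE : Even L) (T : ℕ)
    (hT : 0 < T) (hodd : Odd T) (x0 y0 : Omega L)
    (hcyc : F^[T] (x0, y0) = (x0, y0)) :
    ∀ k : Site L, (∏ t ∈ Finset.range T, (phi (F^[t] (x0, y0)).1).1 k) = 1 := by
  intro k
  set p : Omega L × Omega L := (x0, y0) with hp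
  set f : ℕ → ℤ := fun t => (F^[t] p).1.1 k with hfdef
  set g : ℕ → ℤ := fun t => (F^[t] p).2.1 k with hgdef
  have hfpm : ∀ t, f t = 1 ∨ f t = -1 := fun t => (F^[t] p).1.2 k
  have hgpm : ∀ t, g t = 1 ∨ g t = -1 := fun t => (F^[t] p).2.2 k
  have hfs : ∀ t, f t * f t = 1 := fun t => by rcases hfpm t with h|h <;> simp [h]
  have hgs : ∀ t, g t * g t = 1 := fun t => by rcases hgpm t with h|h <;> simp [h]
  have hg1 : ∀ t, g (t+1) = f t := by
    intro t
    show (F^[t+1] p).2.1 k = (F^[t] p).1.1 k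
    rw [Function.iterate_succ_apply']
    rfl
  have hf1 : ∀ t, f (t+1) = g t * (phi (F^[t] p).1).1 k := by
    intro t
    show (F^[t+1] p).1.1 k = _
    rw [Function.iterate_succ_apply']
    rfl
  have ha : ∀ t, (phi (F^[t] p).1).1 k = g t * f (t+1) := by
    intro t
    rw [hf1 t, ← mul_assoc, hgs t, one_mul]
  have hfT : f T = f 0 := by simp [hfdef, hcyc]
  have hgT : g T = g 0 := by simp [hgdef, hcyc]
  have shift : ∀ (h : ℕ → ℤ), h T = h 0 → h 0 ≠ 0 →
      (∏ t ∈ Finset.range T, h (t+1)) = ∏ t ∈ Finset.range T, h t := by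
    intro h hT' h0
    have e1 : (∏ t ∈ Finset.range T, h (t+1)) * h 0 =
        (∏ t ∈ Finset.range T, h t) * h T := by
      rw [← Finset.prod_range_succ', Finset.prod_range_succ]
    rw [hT'] at e1
    exact mul_right_cancel₀ h0 e1
  have hf0 : f 0 ≠ 0 := by rcases hfpm 0 with h|h <;> simp [h]
  have hg0 : g 0 ≠ 0 := by rcases hgpm 0 with h|h <;> simp [h]
  have pf : (∏ t ∈ Finset.range T, f (t+1)) = ∏ t ∈ Finset.range T, f t :=
    shift f hfT hf0
  have pg : (∏ t ∈ Finset.range T, g t) = ∏ t ∈ Finset.range T, f t := by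
    rw [← shift g hgT hg0]
    exact Finset.prod_congr rfl (fun t _ => hg1 t)
  calc (∏ t ∈ Finset.range T, (phi (F^[t] p).1).1 k)
      = ∏ t ∈ Finset.range T, (g t * f (t+1)) :=
        Finset.prod_congr rfl (fun t _ => ha t)
    _ = (∏ t ∈ Finset.range T, g t) * ∏ t ∈ Finset.range T, f (t+1) :=
        Finset.prod_mul_distrib
    _ = (∏ t ∈ Finset.range T, f t) * ∏ t ∈ Finset.range T, f t := by rw [pf, pg]
    _ = ∏ t ∈ Finset.range T, (f t * f t) := Finset.prod_mul_distrib.symm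
    _ = 1 := by simp [hfs]
end

section
/- Energy conservation of Q2R: define E : Ω × Ω → ℤ by E(x, y) = Σ_{k ∈ (ZMod L)×(ZMod L)} y(k) · (x(k+(1,0)) + x(k-(1,0)) + x(k+(0,1)) + x(k-(0,1))) (this equals −2 times the Ising-like energy of the configuration). Then E is invariant under the Q2R dynamics: E(F(x, y)) = E(x, y) for all (x, y) ∈ Ω × Ω. -/
open Q2R

/-- The (rescaled) Ising-like energy of a configuration. -/
def energy (L : ℕ) [NeZero L] (p : Omega L × Omega L) : ℤ :=
  ∑ k : Site L, p.2.1 k * nbhdSum p.1.1 k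

lemma sum_shift (L : ℕ) [NeZero L] (f : Site L → ℤ) (a : Site L) :
    ∑ k : Site L, f (k + a) = ∑ k : Site L, f k :=
  Fintype.sum_equiv (Equiv.addRight a) _ _ (fun _ => rfl)

lemma key (L : ℕ) [NeZero L] (u w : Site L → ℤ) :
    ∑ k : Site L, u k * nbhdSum w k = ∑ k : Site L, w k * nbhdSum u k := by
  have shift : ∀ (a : Site L), ∑ k : Site L, u k * w (k + a)
      = ∑ k : Site L, u (k - a) * w k := by
    intro a
    rw [← sum_shift L (fun k => u (k - a) * w k) a]
    simp
  simp only [nbhdSum, mul_add, Finset.sum_add_distrib, add_mul]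
  simp only [sub_eq_add_neg, shift]
  simp only [neg_neg, mul_comm]
  ring

/-- Energy conservation of Q2R: `E(F(x, y)) = E(x, y)`. -/
theorem q2r_energy_conserved (L : ℕ) [NeZero L] (hL : 2 ≤ L) (hE : Even L)
    (x y : Omega L) : energy L (F (x, y)) = energy L (x, y) := by
  unfold energy F
  simp only
  rw [key]
  congr 1
  funext k
  show (had y (phi x)).1 k * nbhdSum x.1 k = y.1 k * nbhdSum x.1 k
  unfold had phi
  simp only
  by_cases h : nbhdSum x.1 k = 0 <;> simp [h]
end
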